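/- For every real number γ > 0 there exists η > 0 with the following property: for every b ∈ ℝ such that the line L_b = {(t, γ(t−b)) : t ∈ ℝ} meets the interior of E, there exist a natural number n ≥ 1 and i ∈ {1,2} such that the one-dimensional Lebesgue measure of {t ∈ ℝ : (t, γ(t−b)) ∈ Eₙⁱ} is at least η times the one-dimensional Lebesgue measure of {t ∈ ℝ : (t, γ(t−b)) ∈ E}. -/

import Mathlib

open MeasureTheory

/-- The open triangle with given vertices: the interior of their convex hull. -/
def triInterior (a b c : ℝ × ℝ) : Set (ℝ × ℝ) :=
  interior (convexHull ℝ {a, b, c})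

/-- The closed triangle `E` with vertices `(0,0)`, `(1,0)`, `(0,1)`. -/
def E : Set (ℝ × ℝ) := {p : ℝ × ℝ | 0 ≤ p.1 ∧ 0 ≤ p.2 ∧ p.1 + p.2 ≤ 1}

/-- `Eₙ¹`: the interior of the right triangle with vertices
`((2^{n-1}-1)/2^{n-1}, 1/2ⁿ)`, `((2ⁿ-1)/2ⁿ, 0)`, `((2ⁿ-1)/2ⁿ, 1/2ⁿ)`. -/
noncomputable def En1 (n : ℕ) : Set (ℝ × ℝ) :=
  triInterior (((2 : ℝ) ^ (n - 1) - 1) / 2 ^ (n - 1), 1 / 2 ^ n)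
    (((2 : ℝ) ^ n - 1) / 2 ^ n, 0)
    (((2 : ℝ) ^ n - 1) / 2 ^ n, 1 / 2 ^ n)

/-- `Eₙ²`: the interior of the triangle with vertices
`(1/2ⁿ, (2^{n-1}-1)/2^{n-1})`, `(0, (2ⁿ-1)/2ⁿ)`, `(1/2ⁿ, (2ⁿ-1)/2ⁿ)`. -/
noncomputable def En2 (n : ℕ) : Set (ℝ × ℝ) :=
  triInterior (1 / 2 ^ n, ((2 : ℝ) ^ (n - 1) - 1) / 2 ^ (n - 1))
    (0, ((2 : ℝ) ^ n - 1) / 2 ^ n)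
    (1 / 2 ^ n, ((2 : ℝ) ^ n - 1) / 2 ^ n)

/-
Write `d = 1 - b`. For `b ≥ 0` the line enters `E` through `(b, 0)`, and its slice of `E` has
parameter length `d / (1 + γ)`. With `s = 2⁻ⁿ`, the set `Eₙ¹` contains the open corner
`{x < 1 - s, y < s, x + y > 1 - s}`, whose slice is the interval
`(b + (d - s) / (1 + γ), b + min (d - s) (s / γ))`. Its length is a fixed proportion of the
chord as long as `s / d` stays in a compact subinterval of `(γ / (1 + 2γ), 1)`; since
`γ / (1 + 2γ) < 1 / 2`, there is such a subinterval of the form `[λ, 2λ]`, and it contains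
`s / d` for some dyadic `s`.
For `b < 0`, swapping the coordinates fixes `E`, exchanges `Eₙ²` and `Eₙ¹`, and turns the line
into one of slope `γ⁻¹` through `(-γb, 0)`, rescaling all slice measures by the same factor.
-/

lemma smul_add_smul_add_smul_mem_convexHull {𝕜 V : Type*} [Field 𝕜] [LinearOrder 𝕜]
    [IsStrictOrderedRing 𝕜] [AddCommGroup V] [Module 𝕜 V] {x y z : V} {a b c : 𝕜}
    (ha : 0 ≤ a) (hb : 0 ≤ b) (hc : 0 ≤ c) (habc : a + b + c = 1) :
    a • x + b • y + c • z ∈ convexHull 𝕜 {x, y, z} := by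
  simpa [Fin.sum_univ_three, add_assoc] using (convex_convexHull 𝕜 ({x, y, z} : Set V)).sum_mem
    (t := Finset.univ) (w := ![a, b, c]) (z := ![x, y, z])
    (by intro i _; fin_cases i <;> simpa) (by simp [Fin.sum_univ_three, habc])
    (by intro i _; fin_cases i <;> exact subset_convexHull 𝕜 _ (by simp))

lemma triInterior_swap (a b c : ℝ × ℝ) :
    triInterior a.swap b.swap c.swap = Prod.swap ⁻¹' triInterior a b c := by
  have hull : convexHull ℝ {a.swap, b.swap, c.swap} = Prod.swap ⁻¹' convexHull ℝ {a, b, c} := by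
    rw [← Set.image_swap_eq_preimage_swap]
    simpa [Set.image_insert_eq] using
      ((LinearEquiv.prodComm ℝ ℝ ℝ).toLinearMap.image_convexHull {a, b, c}).symm
  rw [triInterior, triInterior, hull]
  exact ((Homeomorph.prodComm ℝ ℝ).preimage_interior _).symm

lemma En2_eq_preimage_swap (n : ℕ) : En2 n = Prod.swap ⁻¹' En1 n := by
  rw [En1, ← triInterior_swap]
  rfl

lemma preimage_swap_E : Prod.swap ⁻¹' E = E := by
  ext ⟨x, y⟩
  simp only [E, Set.mem_preimage, Prod.swap_prod_mk, Set.mem_ofPred_eq, add_comm y x]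
  tauto

lemma volume_setOf_line_mem_preimage_swap {γ : ℝ} (hγ : 0 < γ) (b : ℝ) (S : Set (ℝ × ℝ)) :
    volume {t : ℝ | (t, γ * (t - b)) ∈ Prod.swap ⁻¹' S} =
      ENNReal.ofReal γ⁻¹ * volume {u : ℝ | (u, γ⁻¹ * (u - -(γ * b))) ∈ S} := by
  have hpre : {t : ℝ | (t, γ * (t - b)) ∈ Prod.swap ⁻¹' S} =
      (· + -b) ⁻¹' ((γ * ·) ⁻¹' {u : ℝ | (u, γ⁻¹ * (u - -(γ * b))) ∈ S}) := by
    ext t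
    simp only [Set.mem_ofPred_eq, Set.mem_preimage, Prod.swap_prod_mk]
    rw [show γ⁻¹ * (γ * (t + -b) - -(γ * b)) = t by field_simp; ring, sub_eq_add_neg]
  rw [hpre, measure_preimage_add_right, Real.volume_preimage_mul_left hγ.ne',
    abs_of_pos (inv_pos.2 hγ)]

lemma exists_le_one_div_two_pow_le {L : ℝ} (hL : 0 < L) (hL' : L ≤ 1 / 2) :
    ∃ n : ℕ, 1 ≤ n ∧ L ≤ 1 / 2 ^ n ∧ 1 / 2 ^ n ≤ 2 * L := by
  have hinv : 2 ≤ 1 / L := by rwa [le_one_div two_pos hL]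
  obtain ⟨n, hle, hlt⟩ := exists_nat_pow_near (by linarith : 1 ≤ 1 / L) one_lt_two
  have hn : 1 ≤ n := by
    by_contra! h
    simp only [Nat.lt_one_iff.1 h, zero_add, pow_one] at hlt
    linarith
  refine ⟨n, hn, (le_one_div hL (by positivity)).2 hle, ?_⟩
  rw [div_lt_iff₀ hL, pow_succ] at hlt
  rw [div_le_iff₀ (by positivity)]
  linarith

lemma En1_eq_triInterior {n : ℕ} (hn : 1 ≤ n) :
    En1 n = triInterior (1 - 2 * (1 / 2 ^ n), 1 / 2 ^ n) (1 - 1 / 2 ^ n, 0)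
      (1 - 1 / 2 ^ n, 1 / 2 ^ n) := by
  obtain ⟨m, rfl⟩ := Nat.exists_eq_add_of_le' hn
  have hm : ((2 : ℝ) ^ m - 1) / 2 ^ m = 1 - 2 * (1 / 2 ^ (m + 1)) := by
    field_simp
    ring
  have hm' : ((2 : ℝ) ^ (m + 1) - 1) / 2 ^ (m + 1) = 1 - 1 / 2 ^ (m + 1) := by
    field_simp
  rw [En1, Nat.add_sub_cancel, hm, hm']

lemma setOf_corner_subset_triInterior {s : ℝ} (hs : 0 < s) :
    {p : ℝ × ℝ | p.1 < 1 - s ∧ p.2 < s ∧ 1 - s < p.1 + p.2} ⊆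
      triInterior (1 - 2 * s, s) (1 - s, 0) (1 - s, s) := by
  refine interior_maximal ?_ ((isOpen_lt continuous_fst continuous_const).inter
    ((isOpen_lt continuous_snd continuous_const).inter
      (isOpen_lt continuous_const (continuous_fst.add continuous_snd))))
  rintro ⟨u, v⟩ ⟨hu, hv, huv⟩
  have hcomb : ((1 - s - u) / s) • ((1 - 2 * s, s) : ℝ × ℝ) + (1 - v / s) • ((1 - s, 0) : ℝ × ℝ)
      + ((u + v - 1 + s) / s) • ((1 - s, s) : ℝ × ℝ) = (u, v) := by
    simp only [Prod.smul_mk, Prod.mk_add_mk, smul_eq_mul, Prod.mk.injEq]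
    constructor <;> field_simp <;> ring
  rw [← hcomb]
  refine smul_add_smul_add_smul_mem_convexHull (div_nonneg (by linarith) hs.le)
    ?_ (div_nonneg (by linarith) hs.le) (by field_simp; ring)
  rw [sub_nonneg, div_le_one hs]
  exact hv.le

lemma setOf_line_mem_E_subset_Icc {γ b : ℝ} (hγ : 0 < γ) :
    {t : ℝ | (t, γ * (t - b)) ∈ E} ⊆ Set.Icc b (b + (1 - b) / (1 + γ)) := by
  rintro t ⟨-, hy, hxy⟩
  refine ⟨by nlinarith, ?_⟩
  rw [← sub_le_iff_le_add', le_div_iff₀ (by linarith)]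
  linarith

lemma Ioo_subset_setOf_line_mem_En1 {γ : ℝ} (hγ : 0 < γ) (b : ℝ) {n : ℕ} (hn : 1 ≤ n) :
    Set.Ioo (b + (1 - b - 1 / 2 ^ n) / (1 + γ)) (b + min (1 - b - 1 / 2 ^ n) (1 / 2 ^ n / γ)) ⊆
      {t : ℝ | (t, γ * (t - b)) ∈ En1 n} := by
  rintro t ⟨hlo, hhi⟩
  rw [Set.mem_ofPred_eq, En1_eq_triInterior hn]
  refine setOf_corner_subset_triInterior (by positivity) ⟨?_, ?_, ?_⟩
  · linarith [min_le_left (1 - b - 1 / 2 ^ n) (1 / 2 ^ n / γ)]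
  · have : t - b < 1 / 2 ^ n / γ := by linarith [min_le_right (1 - b - 1 / 2 ^ n) (1 / 2 ^ n / γ)]
    rw [lt_div_iff₀ hγ] at this
    linarith
  · rw [← lt_sub_iff_add_lt', div_lt_iff₀ (by linarith)] at hlo
    dsimp only
    linarith

lemma exists_En1_volume_ge {γ η b : ℝ} (hγ : 0 < γ) (hb : 0 ≤ b)
    (hη₁ : 2 * (1 + 2 * γ) * η ≤ γ) (hη₂ : 4 * γ * η ≤ 1) :
    ∃ n : ℕ, 1 ≤ n ∧ ENNReal.ofReal η * volume {t : ℝ | (t, γ * (t - b)) ∈ E} ≤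
      volume {t : ℝ | (t, γ * (t - b)) ∈ En1 n} := by
  have hE : volume {t : ℝ | (t, γ * (t - b)) ∈ E} ≤ ENNReal.ofReal ((1 - b) / (1 + γ)) := by
    calc _ ≤ volume (Set.Icc b (b + (1 - b) / (1 + γ))) :=
          measure_mono (setOf_line_mem_E_subset_Icc hγ)
      _ = _ := by rw [Real.volume_Icc, add_sub_cancel_left]
  set d := 1 - b
  rcases le_or_gt d 0 with hd | hd
  · refine ⟨1, le_rfl, ?_⟩
    rw [ENNReal.ofReal_eq_zero.2 (div_nonpos_of_nonpos_of_nonneg hd (by linarith)),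
      nonpos_iff_eq_zero] at hE
    simp [hE]
  -- `L / d` is the midpoint of `γ / (1 + 2γ)` and `1 / 2`
  obtain ⟨n, hn, hs₁, hs₂⟩ := exists_le_one_div_two_pow_le
    (L := (4 * γ + 1) * d / (4 * (1 + 2 * γ))) (by positivity)
    (by rw [div_le_iff₀ (by positivity)]; nlinarith)
  refine ⟨n, hn, ?_⟩
  set s : ℝ := 1 / 2 ^ n
  rw [div_le_iff₀ (by positivity)] at hs₁
  rw [mul_div_assoc', le_div_iff₀ (by positivity)] at hs₂
  have hlen : η * (d / (1 + γ)) ≤ b + min (d - s) (s / γ) - (b + (d - s) / (1 + γ)) := by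
    rw [add_sub_add_left_eq_sub, le_sub_iff_add_le, mul_div_assoc', ← add_div]
    refine le_min ?_ ?_
    · rw [div_le_iff₀ (by positivity)]
      nlinarith
    · rw [div_le_div_iff₀ (by positivity) hγ]
      nlinarith
  calc ENNReal.ofReal η * volume {t : ℝ | (t, γ * (t - b)) ∈ E}
      ≤ ENNReal.ofReal η * ENNReal.ofReal (d / (1 + γ)) := by gcongr
    _ = ENNReal.ofReal (η * (d / (1 + γ))) := (ENNReal.ofReal_mul' (by positivity)).symm
    _ ≤ ENNReal.ofReal (b + min (d - s) (s / γ) - (b + (d - s) / (1 + γ))) :=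
          ENNReal.ofReal_le_ofReal hlen
    _ = volume (Set.Ioo (b + (d - s) / (1 + γ)) (b + min (d - s) (s / γ))) :=
          Real.volume_Ioo.symm
    _ ≤ _ := measure_mono (Ioo_subset_setOf_line_mem_En1 hγ b hn)

theorem stmt1 (γ : ℝ) (hγ : 0 < γ) :
    ∃ η > (0 : ℝ), ∀ b : ℝ,
      (∃ t : ℝ, (t, γ * (t - b)) ∈ interior E) →
      ∃ n : ℕ, 1 ≤ n ∧
        (ENNReal.ofReal η * volume {t : ℝ | (t, γ * (t - b)) ∈ E} ≤
            volume {t : ℝ | (t, γ * (t - b)) ∈ En1 n} ∨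
          ENNReal.ofReal η * volume {t : ℝ | (t, γ * (t - b)) ∈ E} ≤
            volume {t : ℝ | (t, γ * (t - b)) ∈ En2 n}) := by
  -- `γ / (4 (1 + γ)²)` is invariant under `γ ↦ γ⁻¹`, the slope after swapping the axes
  set η := γ / (4 * (1 + γ) ^ 2) with hη
  refine ⟨η, by positivity, fun b _ => ?_⟩
  rcases le_or_gt 0 b with hb | hb
  · obtain ⟨n, hn, h⟩ := exists_En1_volume_ge (η := η) hγ hb
      (by rw [hη, mul_div_assoc', div_le_iff₀ (by positivity)]; nlinarith [sq_nonneg γ])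
      (by rw [hη, mul_div_assoc', div_le_one (by positivity)]; nlinarith)
    exact ⟨n, hn, Or.inl h⟩
  · obtain ⟨n, hn, h⟩ := exists_En1_volume_ge (η := η) (inv_pos.2 hγ) (b := -(γ * b))
      (by nlinarith)
      (by rw [hη]; field_simp; nlinarith) (by rw [hη]; field_simp; nlinarith)
    refine ⟨n, hn, Or.inr ?_⟩
    rw [← preimage_swap_E, En2_eq_preimage_swap, volume_setOf_line_mem_preimage_swap hγ,
      volume_setOf_line_mem_preimage_swap hγ, mul_left_comm]
    gcongr
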